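/- Let n ≥ 3 and let S ⊆ V(C_n) be a nonempty C_n-admissible set. Then |P(S;C_n)| = Σ_{v ∈ S} |P(S∖{v}; C_n − v)|, where C_n − v denotes the induced subgraph of C_n on the n−1 vertices other than v (a path graph), and its labelings are bijections to {1,…,n−1}. -/

import Mathlib

open SimpleGraph

/-- A vertex `v` is a peak of the labeling `ℓ` of the graph `G` if `v` has degree at least 2
and the label of `v` is larger than the labels of all its neighbors. -/
def IsPeak {V : Type*} {n : ℕ} (G : SimpleGraph V) (ℓ : V ≃ Fin n) (v : V) : Prop :=
  2 ≤ (G.neighborSet v).ncard ∧ ∀ w, G.Adj v w → ℓ w < ℓ v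

/-- The peak set of a labeling `ℓ` of the graph `G`. -/
def peakSet {V : Type*} {n : ℕ} (G : SimpleGraph V) (ℓ : V ≃ Fin n) : Set V :=
  {v | IsPeak G ℓ v}

/-- `P(S;G)`: the set of labelings of `G` (bijections from `V(G)` to `{1,…,n}`,
here realized as equivalences `V ≃ Fin n` with `n = |V(G)|`) whose peak set is exactly `S`. -/
def peakLabelings {V : Type*} [Fintype V] (G : SimpleGraph V) (S : Set V) :
    Set (V ≃ Fin (Fintype.card V)) :=
  {ℓ | peakSet G ℓ = S}

/-- The join of two simple graphs: keep all edges of both graphs and connect every vertex of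
the first graph with every vertex of the second graph. -/
def graphJoin {V₁ V₂ : Type*} (G₁ : SimpleGraph V₁) (G₂ : SimpleGraph V₂) :
    SimpleGraph (V₁ ⊕ V₂) where
  Adj a b :=
    match a, b with
    | Sum.inl u, Sum.inl v => G₁.Adj u v
    | Sum.inr u, Sum.inr v => G₂.Adj u v
    | Sum.inl _, Sum.inr _ => True
    | Sum.inr _, Sum.inl _ => True
  symm := ⟨by rintro (a | a) (b | b) h <;> (try dsimp only at h) <;> first | trivial | exact h.symm⟩
  loopless := ⟨by
    intro x
    rcases x with (a | a) <;> intro h <;> (try dsimp only at h)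
    exacts [G₁.irrefl h, G₂.irrefl h]⟩

/-- The cycle graph on `ℤ/nℤ`: `i` is adjacent to `i ± 1 (mod n)`. -/
def cycleZMod (n : ℕ) : SimpleGraph (ZMod n) where
  Adj i j := i ≠ j ∧ (i - j = 1 ∨ j - i = 1)
  symm := ⟨fun _ _ h => ⟨h.1.symm, h.2.symm⟩⟩
  loopless := ⟨fun _ h => h.1 rfl⟩

/-- The path graph on `{0, 1, …, n-1}`: `k` is adjacent to `k + 1`. -/
def pathGraph' (n : ℕ) : SimpleGraph (Fin n) where
  Adj a b := (a : ℕ) + 1 = (b : ℕ) ∨ (b : ℕ) + 1 = (a : ℕ)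
  symm := ⟨fun _ _ h => h.symm⟩
  loopless := ⟨fun a h => by (try dsimp only at h); omega⟩

namespace CPR

/-! ### Labels -/

def top (M : ℕ) (hM : 0 < M) : Fin M := ⟨M - 1, by omega⟩

lemma lt_top {M : ℕ} (hM : 0 < M) {j : Fin M} (hj : j ≠ top M hM) : j < top M hM := by
  have h1 := j.isLt
  have h2 : (j : ℕ) ≠ M - 1 := fun hc => hj (Fin.ext hc)
  exact Fin.lt_def.mpr (by simp only [top]; omega)

variable {M M' n : ℕ}

def shrinkTop (hM : 0 < M) (h : M = M' + 1) : {j : Fin M // j ≠ top M hM} ≃ Fin M' where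
  toFun j := ⟨(j.1 : ℕ), by
    have h1 := j.1.isLt
    have h2 : (j.1 : ℕ) ≠ M - 1 := fun hc => j.2 (Fin.ext hc)
    omega⟩
  invFun i := ⟨⟨(i : ℕ), by have := i.isLt; omega⟩, by
    intro hc
    have := congrArg Fin.val hc
    simp only [top] at this
    have := i.isLt
    omega⟩
  left_inv j := rfl
  right_inv i := rfl

def restrictL (v : Fin n) (hM : 0 < M) (h : M = M' + 1) (ℓ : Fin n ≃ Fin M)
    (hv : ℓ v = top M hM) : {u : Fin n // u ≠ v} ≃ Fin M' :=
  (ℓ.subtypeEquiv (fun u => by rw [← hv]; exact not_congr ℓ.apply_eq_iff_eq |>.symm)).trans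
    (shrinkTop hM h)

lemma restrictL_val (v : Fin n) (hM : 0 < M) (h : M = M' + 1) (ℓ : Fin n ≃ Fin M)
    (hv : ℓ v = top M hM) (u : {u : Fin n // u ≠ v}) :
    ((restrictL v hM h ℓ hv) u : ℕ) = (ℓ u.1 : ℕ) := rfl

def extendL (v : Fin n) (hM : 0 < M) (h : M = M' + 1)
    (ℓ' : {u : Fin n // u ≠ v} ≃ Fin M') : Fin n ≃ Fin M where
  toFun u := if hu : u = v then top M hM
    else ⟨(ℓ' ⟨u, hu⟩ : ℕ), by have := (ℓ' ⟨u, hu⟩).isLt; omega⟩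
  invFun j := if hj : j = top M hM then v
    else (ℓ'.symm ⟨(j : ℕ), by
      have h1 := j.isLt
      have h2 : (j : ℕ) ≠ M - 1 := fun hc => hj (Fin.ext hc)
      omega⟩).1
  left_inv u := by
    beta_reduce
    by_cases hu : u = v
    · subst hu; simp
    · rw [dif_neg hu, dif_neg (by
        intro hc
        have := congrArg Fin.val hc
        simp only [top] at this
        have := (ℓ' ⟨u, hu⟩).isLt
        omega)]
      simp [Equiv.symm_apply_apply]
  right_inv j := by
    beta_reduce
    by_cases hj : j = top M hM
    · subst hj; simp
    · rw [dif_neg hj, dif_neg (ℓ'.symm _).2]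
      apply Fin.ext
      simp [Equiv.apply_symm_apply]

lemma extendL_apply_v (v : Fin n) (hM : 0 < M) (h : M = M' + 1)
    (ℓ' : {u : Fin n // u ≠ v} ≃ Fin M') : extendL v hM h ℓ' v = top M hM := dif_pos rfl

lemma extendL_val (v : Fin n) (hM : 0 < M) (h : M = M' + 1)
    (ℓ' : {u : Fin n // u ≠ v} ≃ Fin M') {u : Fin n} (hu : u ≠ v) :
    (extendL v hM h ℓ' u : ℕ) = (ℓ' ⟨u, hu⟩ : ℕ) := by
  show ((if hu' : u = v then _ else _ : Fin M) : ℕ) = _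
  rw [dif_neg hu]

lemma restrict_extend (v : Fin n) (hM : 0 < M) (h : M = M' + 1)
    (ℓ' : {u : Fin n // u ≠ v} ≃ Fin M') (hv : extendL v hM h ℓ' v = top M hM) :
    restrictL v hM h (extendL v hM h ℓ') hv = ℓ' := by
  apply Equiv.ext
  intro u
  apply Fin.ext
  rw [restrictL_val, extendL_val v hM h ℓ' u.2]

lemma extend_restrict (v : Fin n) (hM : 0 < M) (h : M = M' + 1) (ℓ : Fin n ≃ Fin M)
    (hv : ℓ v = top M hM) : extendL v hM h (restrictL v hM h ℓ hv) = ℓ := by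
  apply Equiv.ext
  intro u
  by_cases hu : u = v
  · subst hu; rw [extendL_apply_v, hv]
  · apply Fin.ext
    rw [extendL_val v hM h _ hu, restrictL_val]

lemma extendL_injective (v : Fin n) (hM : 0 < M) (h : M = M' + 1) :
    Function.Injective (extendL v hM h) := by
  intro a b hab
  apply Equiv.ext
  intro u
  apply Fin.ext
  rw [← extendL_val v hM h a u.2, ← extendL_val v hM h b u.2, hab]

/-! ### Counting helper -/

lemma ncard_biUnion {ι α : Type*} [Finite α] (s : Finset ι) (f : ι → Set α)
    (h : (s : Set ι).PairwiseDisjoint f) :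
    (⋃ i ∈ s, f i).ncard = ∑ i ∈ s, (f i).ncard := by
  classical
  induction s using Finset.induction_on with
  | empty => simp
  | @insert a s ha ih =>
    rw [Finset.sum_insert ha, Finset.set_biUnion_insert,
      Set.ncard_union_eq ?_ (Set.toFinite _) (Set.toFinite _),
      ih (h.subset (by simp only [Finset.coe_insert]; exact Set.subset_insert _ _))]
    rw [Set.disjoint_iUnion₂_right]
    intro i hi
    exact h (by simp) (by simp [hi]) (fun hc => ha (hc ▸ hi))

/-! ### Cycle graph facts -/

variable {k : ℕ}

lemma cyc_ncard (u : Fin (k + 3)) : ((cycleGraph (k + 3)).neighborSet u).ncard = 2 := by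
  have h1 : ((cycleGraph (k + 3)).neighborSet u).ncard
      = (cycleGraph (k + 3)).degree u := by
    rw [← Nat.card_coe_set_eq, Nat.card_eq_fintype_card,
      SimpleGraph.card_neighborSet_eq_degree]
  rw [h1, cycleGraph_degree_three_le]

lemma cyc_pair_ne (u : Fin (k + 3)) : u - 1 ≠ u + 1 := by
  intro hc
  have h2 := cyc_ncard u
  rw [cycleGraph_neighborSet (n := k + 1), hc, Set.pair_eq_singleton,
    Set.ncard_singleton] at h2
  omega

lemma subgraph_ncard (v : Fin (k + 3)) (u : {x : Fin (k + 3) // x ≠ v}) :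
    (((cycleGraph (k + 3)).comap
        (Subtype.val : {x : Fin (k + 3) // x ≠ v} → Fin (k + 3))).neighborSet u).ncard
      = (((cycleGraph (k + 3)).neighborSet u.1) \ {v}).ncard := by
  have h0 : ((cycleGraph (k + 3)).comap
        (Subtype.val : {x : Fin (k + 3) // x ≠ v} → Fin (k + 3))).neighborSet u
      = Subtype.val ⁻¹' ((cycleGraph (k + 3)).neighborSet u.1) := rfl
  rw [h0, ← Set.ncard_image_of_injective _ Subtype.val_injective,
    Set.image_preimage_eq_inter_range, Subtype.range_coe_subtype]
  have hset : (cycleGraph (k + 3)).neighborSet u.1 ∩ {x | x ≠ v}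
      = ((cycleGraph (k + 3)).neighborSet u.1) \ {v} := by
    ext x
    simp only [Set.mem_inter_iff, Set.mem_setOf_eq, Set.mem_diff, Set.mem_singleton_iff]
  rw [hset]

lemma subgraph_ncard_of_not_adj (v : Fin (k + 3)) (u : {x : Fin (k + 3) // x ≠ v})
    (hadj : ¬ (cycleGraph (k + 3)).Adj u.1 v) :
    (((cycleGraph (k + 3)).comap
        (Subtype.val : {x : Fin (k + 3) // x ≠ v} → Fin (k + 3))).neighborSet u).ncard = 2 := by
  rw [subgraph_ncard, Set.diff_singleton_eq_self (by
    rw [SimpleGraph.mem_neighborSet]; exact hadj), cyc_ncard]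

lemma pair_diff_ncard (a v : Fin (k + 3)) (hv : v ∈ ({a - 1, a + 1} : Set (Fin (k + 3)))) :
    (({a - 1, a + 1} : Set (Fin (k + 3))) \ {v}).ncard = 1 := by
  rcases hv with hv | hv
  · subst hv; rw [Set.pair_diff_left (cyc_pair_ne a), Set.ncard_singleton]
  · rw [Set.mem_singleton_iff] at hv
    subst hv
    rw [Set.pair_diff_right (cyc_pair_ne a), Set.ncard_singleton]

lemma subgraph_ncard_of_adj (v : Fin (k + 3)) (u : {x : Fin (k + 3) // x ≠ v})
    (hadj : (cycleGraph (k + 3)).Adj u.1 v) :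
    (((cycleGraph (k + 3)).comap
        (Subtype.val : {x : Fin (k + 3) // x ≠ v} → Fin (k + 3))).neighborSet u).ncard = 1 := by
  rw [subgraph_ncard]
  have hv : v ∈ (cycleGraph (k + 3)).neighborSet u.1 := hadj
  rw [cycleGraph_neighborSet (n := k + 1)] at hv ⊢
  exact pair_diff_ncard u.1 v hv

end CPR
namespace CPR

variable {k M M' : ℕ}

lemma top_is_peak (hM : 0 < M) (ℓ : Fin (k + 3) ≃ Fin M) (u : Fin (k + 3))
    (hu : ℓ u = top M hM) : IsPeak (cycleGraph (k + 3)) ℓ u := by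
  refine ⟨by rw [cyc_ncard], fun w hw => ?_⟩
  rw [hu]
  apply lt_top
  intro hc
  exact hw.ne' (ℓ.injective (hc.trans hu.symm))

lemma not_peak_of_adj_top (v : Fin (k + 3)) (hM : 0 < M) (ℓ : Fin (k + 3) ≃ Fin M)
    (hv : ℓ v = top M hM) {u : Fin (k + 3)} (hu : u ≠ v)
    (hadj : (cycleGraph (k + 3)).Adj u v) : ¬ IsPeak (cycleGraph (k + 3)) ℓ u := by
  rintro ⟨-, hpk⟩
  have h1 := hpk v hadj
  have h2 : ℓ u < ℓ v := by
    rw [hv]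
    apply lt_top
    intro hc
    exact hu (ℓ.injective (hc.trans hv.symm))
  exact absurd h1 (lt_asymm h2)

lemma isPeak_transfer (v : Fin (k + 3)) (hM : 0 < M) (h : M = M' + 1)
    (ℓ : Fin (k + 3) ≃ Fin M) (hv : ℓ v = top M hM) {u : Fin (k + 3)} (hu : u ≠ v) :
    IsPeak ((cycleGraph (k + 3)).comap
        (Subtype.val : {x : Fin (k + 3) // x ≠ v} → Fin (k + 3)))
      (restrictL v hM h ℓ hv) ⟨u, hu⟩ ↔ IsPeak (cycleGraph (k + 3)) ℓ u := by
  by_cases hadj : (cycleGraph (k + 3)).Adj u v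
  · refine iff_of_false ?_ (not_peak_of_adj_top v hM ℓ hv hu hadj)
    rintro ⟨hdeg, -⟩
    rw [subgraph_ncard_of_adj v ⟨u, hu⟩ hadj] at hdeg
    omega
  · unfold IsPeak
    rw [subgraph_ncard_of_not_adj v ⟨u, hu⟩ hadj, cyc_ncard]
    constructor
    · rintro ⟨-, hp⟩
      refine ⟨le_refl 2, fun w hw => ?_⟩
      have hwv : w ≠ v := by rintro rfl; exact hadj hw
      have h2 := hp ⟨w, hwv⟩ hw
      rw [Fin.lt_def] at h2 ⊢
      rwa [restrictL_val, restrictL_val] at h2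
    · rintro ⟨-, hp⟩
      refine ⟨le_refl 2, fun w hw => ?_⟩
      have h2 := hp w.1 hw
      rw [Fin.lt_def] at h2 ⊢
      rw [restrictL_val, restrictL_val]
      exact h2

lemma peakSet_transfer (v : Fin (k + 3)) (hM : 0 < M) (h : M = M' + 1)
    (ℓ : Fin (k + 3) ≃ Fin M) (hv : ℓ v = top M hM) (S : Set (Fin (k + 3))) (hvS : v ∈ S) :
    peakSet (cycleGraph (k + 3)) ℓ = S ↔
      peakSet ((cycleGraph (k + 3)).comap
          (Subtype.val : {x : Fin (k + 3) // x ≠ v} → Fin (k + 3)))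
        (restrictL v hM h ℓ hv) = Subtype.val ⁻¹' (S \ {v}) := by
  constructor
  · intro hps
    ext ⟨u, hu⟩
    simp only [peakSet, Set.mem_setOf_eq, Set.mem_preimage, Set.mem_diff,
      Set.mem_singleton_iff]
    rw [isPeak_transfer v hM h ℓ hv hu]
    constructor
    · intro hp
      have h1 : u ∈ peakSet (cycleGraph (k + 3)) ℓ := hp
      rw [hps] at h1
      exact ⟨h1, hu⟩
    · rintro ⟨huS, -⟩
      have h1 : u ∈ S := huS
      rw [← hps] at h1
      exact h1
  · intro hps
    ext u
    simp only [peakSet, Set.mem_setOf_eq]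
    by_cases hu : u = v
    · subst hu
      exact iff_of_true (top_is_peak hM ℓ u hv) hvS
    · rw [← isPeak_transfer v hM h ℓ hv hu]
      have h2 : (⟨u, hu⟩ : {x : Fin (k + 3) // x ≠ v}) ∈
            peakSet ((cycleGraph (k + 3)).comap
              (Subtype.val : {x : Fin (k + 3) // x ≠ v} → Fin (k + 3)))
              (restrictL v hM h ℓ hv)
          ↔ (⟨u, hu⟩ : {x : Fin (k + 3) // x ≠ v}) ∈ (Subtype.val ⁻¹' (S \ {v})) := by
        rw [hps]
      simp only [peakSet, Set.mem_setOf_eq, Set.mem_preimage, Set.mem_diff,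
        Set.mem_singleton_iff] at h2
      rw [h2]
      exact ⟨fun hh => hh.1, fun hh => ⟨hh, hu⟩⟩

end CPR

open CPR

/-- For `n ≥ 3` and a nonempty `C_n`-admissible set `S`,
`|P(S;C_n)| = Σ_{v ∈ S} |P(S∖{v}; C_n − v)|`. -/
theorem cycle_peak_count_recursion (n : ℕ) (hn : 3 ≤ n) (S : Finset (Fin n))
    (hS : S.Nonempty)
    (hadm : (peakLabelings (cycleGraph n) (↑S : Set (Fin n))).Nonempty) :
    (peakLabelings (cycleGraph n) (↑S : Set (Fin n))).ncard =
      ∑ v ∈ S,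
        (peakLabelings
          ((cycleGraph n).comap (Subtype.val : {u : Fin n // u ≠ v} → Fin n))
          (Subtype.val ⁻¹' ((↑S : Set (Fin n)) \ {v}))).ncard := by
  obtain ⟨k, rfl⟩ : ∃ k, n = k + 3 := ⟨n - 3, by omega⟩
  have hM : 0 < Fintype.card (Fin (k + 3)) := by simp
  have hdecomp : peakLabelings (cycleGraph (k + 3)) (↑S : Set (Fin (k + 3)))
      = ⋃ v ∈ S, {ℓ : Fin (k + 3) ≃ Fin (Fintype.card (Fin (k + 3))) |
          peakSet (cycleGraph (k + 3)) ℓ = ↑S ∧ ℓ v = top _ hM} := by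
    ext ℓ
    simp only [peakLabelings, Set.mem_setOf_eq, Set.mem_iUnion, exists_prop]
    constructor
    · intro hps
      refine ⟨ℓ.symm (top _ hM), ?_, hps, ℓ.apply_symm_apply _⟩
      have h1 : ℓ.symm (top _ hM) ∈ peakSet (cycleGraph (k + 3)) ℓ :=
        top_is_peak hM ℓ _ (ℓ.apply_symm_apply _)
      rw [hps] at h1
      exact h1
    · rintro ⟨v, -, hps, -⟩
      exact hps
  have hdisj : (↑S : Set (Fin (k + 3))).PairwiseDisjoint
      (fun v => {ℓ : Fin (k + 3) ≃ Fin (Fintype.card (Fin (k + 3))) |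
          peakSet (cycleGraph (k + 3)) ℓ = ↑S ∧ ℓ v = top _ hM}) := by
    intro a _ b _ hne
    refine Set.disjoint_left.mpr ?_
    rintro ℓ ⟨-, ha⟩ ⟨-, hb⟩
    exact hne (ℓ.injective (ha.trans hb.symm))
  rw [hdecomp, ncard_biUnion S _ hdisj]
  refine Finset.sum_congr rfl (fun v hvS => ?_)
  have hvS' : v ∈ (↑S : Set (Fin (k + 3))) := hvS
  have hMM' : Fintype.card (Fin (k + 3))
      = Fintype.card {u : Fin (k + 3) // u ≠ v} + 1 := by
    have h1 : Fintype.card {u : Fin (k + 3) // u ≠ v}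
        = Fintype.card (Fin (k + 3)) - Fintype.card {u : Fin (k + 3) // u = v} :=
      Fintype.card_subtype_compl _
    rw [Fintype.card_subtype_eq] at h1
    rw [Fintype.card_fin] at h1 ⊢
    omega
  have himg : {ℓ : Fin (k + 3) ≃ Fin (Fintype.card (Fin (k + 3))) |
        peakSet (cycleGraph (k + 3)) ℓ = ↑S ∧ ℓ v = top _ hM}
      = extendL v hM hMM' '' (peakLabelings
          ((cycleGraph (k + 3)).comap
            (Subtype.val : {u : Fin (k + 3) // u ≠ v} → Fin (k + 3)))
          (Subtype.val ⁻¹' ((↑S : Set (Fin (k + 3))) \ {v}))) := by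
    ext ℓ
    simp only [Set.mem_setOf_eq, Set.mem_image, peakLabelings]
    constructor
    · rintro ⟨hps, htop⟩
      exact ⟨restrictL v hM hMM' ℓ htop,
        (peakSet_transfer v hM hMM' ℓ htop (↑S) hvS').mp hps,
        extend_restrict v hM hMM' ℓ htop⟩
    · rintro ⟨ℓ', hQ, rfl⟩
      refine ⟨?_, extendL_apply_v v hM hMM' ℓ'⟩
      apply (peakSet_transfer v hM hMM' _ (extendL_apply_v v hM hMM' ℓ') (↑S) hvS').mpr
      rw [restrict_extend]
      exact hQ
  rw [himg, Set.ncard_image_of_injective _ (extendL_injective v hM hMM')]
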